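/- (Discrete maximum principle) Let P be an n×n stochastic matrix and let v ∈ ℝ^n satisfy Pv ≤ v componentwise. Then: (1) the restriction of v to any final class of P is a constant vector; (2) (Pv)_i = v_i for every i in N^f(P), the union of the final classes of P; (3) the minimum min_i v_i is attained at some node belonging to a final class of P. -/

import Mathlib

open Matrix Filter

/-- `f` is additively homogeneous: `f (c·1 + x) = c·1 + f x`. -/
def AddHomog {n : ℕ} (f : (Fin n → ℝ) → (Fin n → ℝ)) : Prop :=
  ∀ (c : ℝ) (x : Fin n → ℝ), f (fun i => c + x i) = fun i => c + f x i

/-- A map between coordinate spaces is convex if each coordinate function is convex. -/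
def IsConvexMap {n m : ℕ} (f : (Fin n → ℝ) → (Fin m → ℝ)) : Prop :=
  ∀ i, ConvexOn ℝ Set.univ (fun x => f x i)

/-- Subdifferential of a convex map `f : ℝ^n → ℝ^m` at `v`: matrices `P` with
`f x - f v ≥ P (x - v)` componentwise. -/
def Subdiff {n m : ℕ} (f : (Fin n → ℝ) → (Fin m → ℝ)) (v : Fin n → ℝ) :
    Set (Matrix (Fin m) (Fin n) ℝ) :=
  {P | ∀ x i, P.mulVec (x - v) i ≤ f x i - f v i}

/-- `p` is a stochastic vector. -/
def IsStochVec {n : ℕ} (p : Fin n → ℝ) : Prop := (∀ i, 0 ≤ p i) ∧ ∑ i, p i = 1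

/-- `P` is a row-stochastic matrix. -/
def IsStochMat {n : ℕ} (P : Matrix (Fin n) (Fin n) ℝ) : Prop := ∀ i, IsStochVec (P i)

/-- `i` has access to `j` in the graph of the nonnegative matrix `P`
(arcs `i → j` when `P i j ≠ 0`). -/
def MatAccess {n : ℕ} (P : Matrix (Fin n) (Fin n) ℝ) : Fin n → Fin n → Prop :=
  Relation.ReflTransGen (fun i j => P i j ≠ 0)

/-- `C` is a class of `P`: an equivalence class of mutual access. -/
def IsClass {n : ℕ} (P : Matrix (Fin n) (Fin n) ℝ) (C : Set (Fin n)) : Prop :=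
  ∃ i, C = {j | MatAccess P i j ∧ MatAccess P j i}

/-- `C` is a final class of `P`: a class with no access out of itself. -/
def IsFinalClass {n : ℕ} (P : Matrix (Fin n) (Fin n) ℝ) (C : Set (Fin n)) : Prop :=
  IsClass P C ∧ ∀ i ∈ C, ∀ j, MatAccess P i j → j ∈ C

/-- `N^f(P)`: the union of the final classes of `P`. -/
def finalNodes {n : ℕ} (P : Matrix (Fin n) (Fin n) ℝ) : Set (Fin n) :=
  {i | ∃ C, IsFinalClass P C ∧ i ∈ C}

/-- Final graph `G^f(P)`: union of graphs of `P_{FF}` over final classes `F`. -/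
def finalGraph {n : ℕ} (P : Matrix (Fin n) (Fin n) ℝ) : Fin n → Fin n → Prop :=
  fun i j => ∃ C, IsFinalClass P C ∧ i ∈ C ∧ j ∈ C ∧ P i j ≠ 0

/-- `N^f(PP)` for a set of matrices. -/
def finalNodesSet {n : ℕ} (PP : Set (Matrix (Fin n) (Fin n) ℝ)) : Set (Fin n) :=
  {i | ∃ P ∈ PP, i ∈ finalNodes P}

/-- `𝒞^f(PP)`: final classes of matrices in `PP`. -/
def finalClassesSet {n : ℕ} (PP : Set (Matrix (Fin n) (Fin n) ℝ)) : Set (Set (Fin n)) :=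
  {C | ∃ P ∈ PP, IsFinalClass P C}

/-- `𝒢^f(PP)`: union of final graphs of matrices in `PP`. -/
def finalGraphSet {n : ℕ} (PP : Set (Matrix (Fin n) (Fin n) ℝ)) : Fin n → Fin n → Prop :=
  fun i j => ∃ P ∈ PP, finalGraph P i j

/-- Access in a directed graph given as a relation. -/
def GAccess {n : ℕ} (G : Fin n → Fin n → Prop) : Fin n → Fin n → Prop :=
  Relation.ReflTransGen G

/-- `C` is a (nontrivial) class of the graph `G`: an equivalence class of mutual
access containing at least one arc (i.e. the node set of a strongly connected component
of the graph `G`). -/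
def IsGraphClass {n : ℕ} (G : Fin n → Fin n → Prop) (C : Set (Fin n)) : Prop :=
  (∃ i, C = {j | GAccess G i j ∧ GAccess G j i}) ∧ ∃ i ∈ C, ∃ j ∈ C, G i j

/-- `G^k`: arcs are directed paths of length `k` in `G`. -/
def GraphPow {n : ℕ} (G : Fin n → Fin n → Prop) (k : ℕ) : Fin n → Fin n → Prop :=
  fun i j => ∃ c : ℕ → Fin n, c 0 = i ∧ c k = j ∧ ∀ t < k, G (c t) (c (t + 1))

/-- There is a circuit of length `ℓ ≥ 1` of `G` with all nodes in `C`. -/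
def HasCircuitIn {n : ℕ} (G : Fin n → Fin n → Prop) (C : Set (Fin n)) (ℓ : ℕ) : Prop :=
  0 < ℓ ∧ ∃ c : ℕ → Fin n, c 0 = c ℓ ∧ (∀ t ≤ ℓ, c t ∈ C) ∧ ∀ t < ℓ, G (c t) (c (t + 1))

/-- gcd of a set of natural numbers. -/
noncomputable def SetGcd (S : Set ℕ) : ℕ :=
  sInf {d | (∀ s ∈ S, d ∣ s) ∧ ∀ e, (∀ s ∈ S, e ∣ s) → e ∣ d}

/-- lcm of a set of natural numbers. -/
noncomputable def SetLcm (S : Set ℕ) : ℕ :=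
  sInf {m | (∀ s ∈ S, s ∣ m) ∧ ∀ e, (∀ s ∈ S, s ∣ e) → m ∣ e}

/-- Cyclicity of a graph: lcm over the strongly connected components of the
gcd of the lengths of their circuits. -/
noncomputable def GraphCyclicity {n : ℕ} (G : Fin n → Fin n → Prop) : ℕ :=
  SetLcm {d | ∃ C, IsGraphClass G C ∧ d = SetGcd {ℓ | HasCircuitIn G C ℓ}}

/-- The (additive) eigenspace of `f` for eigenvalue `lam`. -/
def Eigenspace {n : ℕ} (f : (Fin n → ℝ) → (Fin n → ℝ)) (lam : ℝ) : Set (Fin n → ℝ) :=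
  {x | f x = fun i => lam + x i}

/-- Restriction of a vector to the coordinates in `C`. -/
def restrictTo {n : ℕ} (C : Set (Fin n)) (x : Fin n → ℝ) : C → ℝ := fun i => x i


/-! A supersolution `Pv ≤ v` of a stochastic matrix obeys a minimum principle: at a node where
`v` is minimal over an arc-closed set, `(Pv)_i` is a weighted average of values that are all
at least `v_i` yet averages to at most `v_i`, so every successor carries the same value. Hence the
minimum propagates along every path. Final classes are arc-closed and strongly connected, which
makes `v` constant on them and `Pv = v` there; and every node, in particular a global minimiser
of `v`, has access to a final class, where the minimum is therefore attained as well. -/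

open Relation

theorem Relation.exists_reflTransGen_terminal {α : Type*} [Finite α] (r : α → α → Prop) (a : α) :
    ∃ b, ReflTransGen r a b ∧ ∀ c, ReflTransGen r b c → ReflTransGen r c b := by
  let _ : Preorder α :=
    { le := ReflTransGen r, le_refl := fun _ => .refl, le_trans := fun _ _ _ => .trans }
  obtain ⟨b, hab, -, hb⟩ := Finite.exists_le_maximal (p := fun _ : α => True) (a := a) trivial
  exact ⟨b, hab, fun c hbc => hb trivial hbc⟩

namespace IsStochVec

variable {n : ℕ} {p v : Fin n → ℝ} {m : ℝ}

theorem dotProduct_eq_of_forall_ne_zero (hp : IsStochVec p) (h : ∀ j, p j ≠ 0 → v j = m) :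
    p ⬝ᵥ v = m := by
  have hterm : ∀ j, p j * v j = p j * m := fun j => by
    rcases eq_or_ne (p j) 0 with hj | hj
    · simp [hj]
    · rw [h j hj]
  simp only [dotProduct, hterm, ← Finset.sum_mul, hp.2, one_mul]

theorem eq_of_dotProduct_le (hp : IsStochVec p) (hm : ∀ j, p j ≠ 0 → m ≤ v j)
    (hsum : p ⬝ᵥ v ≤ m) {j : Fin n} (hj : p j ≠ 0) : v j = m := by
  have hterm : ∀ k, 0 ≤ p k * (v k - m) := fun k => by
    rcases eq_or_ne (p k) 0 with hk | hk
    · simp [hk]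
    · exact mul_nonneg (hp.1 k) (sub_nonneg.mpr (hm k hk))
  have hzero : ∑ k, p k * (v k - m) = 0 := by
    refine le_antisymm ?_ (Finset.sum_nonneg fun k _ => hterm k)
    calc ∑ k, p k * (v k - m) = p ⬝ᵥ v - (∑ k, p k) * m := by
          simp only [dotProduct, mul_sub, Finset.sum_sub_distrib, Finset.sum_mul]
      _ ≤ 0 := by rw [hp.2]; linarith
  have hj0 := (Finset.sum_eq_zero_iff_of_nonneg fun k _ => hterm k).mp hzero j (Finset.mem_univ j)
  linarith [(mul_eq_zero.mp hj0).resolve_left hj]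

end IsStochVec

section FinalClasses

variable {n : ℕ} {P : Matrix (Fin n) (Fin n) ℝ} {C : Set (Fin n)}

theorem IsClass.matAccess (hC : IsClass P C) {i j : Fin n} (hi : i ∈ C) (hj : j ∈ C) :
    MatAccess P i j := by
  obtain ⟨k, rfl⟩ := hC
  exact hi.2.trans hj.1

theorem IsClass.nonempty (hC : IsClass P C) : C.Nonempty := by
  obtain ⟨k, rfl⟩ := hC
  exact ⟨k, .refl, .refl⟩

theorem IsFinalClass.mem_of_ne_zero (hC : IsFinalClass P C) {i j : Fin n} (hi : i ∈ C)
    (hij : P i j ≠ 0) : j ∈ C :=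
  hC.2 i hi j (.single hij)

theorem mem_finalNodes_of_terminal {j : Fin n}
    (hj : ∀ k, MatAccess P j k → MatAccess P k j) : j ∈ finalNodes P :=
  ⟨{k | MatAccess P j k ∧ MatAccess P k j},
    ⟨⟨j, rfl⟩, fun _ hk l hkl => ⟨hk.1.trans hkl, hj l (hk.1.trans hkl)⟩⟩, .refl, .refl⟩

theorem exists_matAccess_mem_finalNodes (P : Matrix (Fin n) (Fin n) ℝ) (i : Fin n) :
    ∃ j, MatAccess P i j ∧ j ∈ finalNodes P := by
  obtain ⟨j, hij, hj⟩ := exists_reflTransGen_terminal (fun i j => P i j ≠ 0) i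
  exact ⟨j, hij, mem_finalNodes_of_terminal hj⟩

end FinalClasses

namespace IsStochMat

variable {n : ℕ} {P : Matrix (Fin n) (Fin n) ℝ} {v : Fin n → ℝ}

theorem eq_of_matAccess_of_isMinOn (hP : IsStochMat P) (hv : ∀ i, (P *ᵥ v) i ≤ v i)
    {C : Set (Fin n)} (hC : ∀ i ∈ C, ∀ j, P i j ≠ 0 → j ∈ C) {i j : Fin n} (hi : i ∈ C)
    (hmin : IsMinOn v C i) (hij : MatAccess P i j) : v j = v i := by
  suffices j ∈ C ∧ v j = v i from this.2
  induction hij with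
  | refl => exact ⟨hi, rfl⟩
  | tail _ hkl ih =>
    obtain ⟨hk, hvk⟩ := ih
    refine ⟨hC _ hk _ hkl, (hP _).eq_of_dotProduct_le (fun l hl => hmin (hC _ hk l hl)) ?_ hkl⟩
    exact hvk ▸ hv _

theorem eq_of_mem_finalClass (hP : IsStochMat P) (hv : ∀ i, (P *ᵥ v) i ≤ v i)
    {C : Set (Fin n)} (hC : IsFinalClass P C) {i j : Fin n} (hi : i ∈ C) (hj : j ∈ C) :
    v i = v j := by
  obtain ⟨k, hk, hmin⟩ := C.exists_min_image v C.toFinite hC.1.nonempty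
  have hconst : ∀ l ∈ C, v l = v k := fun l hl =>
    hP.eq_of_matAccess_of_isMinOn hv (fun _ hl _ => hC.mem_of_ne_zero hl) hk hmin
      (hC.1.matAccess hk hl)
  rw [hconst i hi, hconst j hj]

end IsStochMat

/-- Discrete maximum principle: if `P` is stochastic and `Pv ≤ v`,
then `v` is constant on each final class of `P`, `Pv = v` on the union of the final
classes, and the minimum of `v` is attained on a final class. -/
theorem stmt4 (n : ℕ) (hn : 1 ≤ n) (P : Matrix (Fin n) (Fin n) ℝ)
    (hP : IsStochMat P) (v : Fin n → ℝ) (hv : ∀ i, P.mulVec v i ≤ v i) :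
    (∀ C, IsFinalClass P C → ∀ i ∈ C, ∀ j ∈ C, v i = v j) ∧
    (∀ i ∈ finalNodes P, P.mulVec v i = v i) ∧
    (∃ i ∈ finalNodes P, ∀ j, v i ≤ v j) := by
  refine ⟨fun C hC i hi j hj => hP.eq_of_mem_finalClass hv hC hi hj, ?_, ?_⟩
  · rintro i ⟨C, hC, hi⟩
    exact (hP i).dotProduct_eq_of_forall_ne_zero fun j hij =>
      hP.eq_of_mem_finalClass hv hC (hC.mem_of_ne_zero hi hij) hi
  · obtain ⟨i, -, hmin⟩ := Set.univ.exists_min_image v Set.finite_univ ⟨⟨0, hn⟩, trivial⟩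
    obtain ⟨j, hij, hj⟩ := exists_matAccess_mem_finalNodes P i
    have hji : v j = v i :=
      hP.eq_of_matAccess_of_isMinOn hv (fun _ _ _ _ => trivial) trivial hmin hij
    exact ⟨j, hj, fun k => hji ▸ hmin k trivial⟩
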